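/- arXiv:2404.16321 — 3 statements merged into one kernel-verified Lean document; each statement's English description precedes it below -/
import Mathlib

section
/- For any polynomial functor p, the limit c_p = lim(⋯ → p^((2)) → p^((1)) → p^((0))) of the chain defined by p^((0)) = y and p^((1+i)) = y × (p ◁ p^((i))), with projection maps π^((i)), carries a ◁-comonoid structure: a counit ε : c_p → y (the projection to p^((0))) and a comultiplication δ : c_p → c_p ◁ c_p, satisfying counitality and coassociativity. -/
universe u

/-- A morphism of polynomial functors. -/
structure PolyHom (p q : PFunctor.{u, u}) : Type u where
  onPos : p.A → q.A
  onDir : ∀ a : p.A, q.B (onPos a) → p.B a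

/-- Identity morphism. -/
def idHom (p : PFunctor.{u, u}) : PolyHom p p := ⟨fun a => a, fun _ d => d⟩

/-- Composition (diagrammatic order). -/
def composePoly {p q r : PFunctor.{u, u}} (φ : PolyHom p q) (ψ : PolyHom q r) : PolyHom p r :=
  ⟨fun a => ψ.onPos (φ.onPos a), fun a d => φ.onDir a (ψ.onDir (φ.onPos a) d)⟩

/-- The functorial action of `◁` (composition of polynomials) on morphisms. -/
def compHom {p p' q q' : PFunctor.{u, u}} (φ : PolyHom p p') (ψ : PolyHom q q') :
    PolyHom (p.comp q) (p'.comp q') where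
  onPos x := ⟨φ.onPos x.1, fun b => ψ.onPos (x.2 (φ.onDir x.1 b))⟩
  onDir x d := ⟨φ.onDir x.1 d.1, ψ.onDir _ d.2⟩

/-- The identity polynomial `y` (the unit for `◁`). -/
def yPoly : PFunctor.{u, u} := ⟨PUnit, fun _ => PUnit⟩

/-- The left unitor `y ◁ p → p`. -/
def lunitHom (p : PFunctor.{u, u}) : PolyHom (yPoly.comp p) p where
  onPos x := x.2 PUnit.unit
  onDir x d := ⟨PUnit.unit, d⟩

/-- The right unitor `p ◁ y → p`. -/
def runitHom (p : PFunctor.{u, u}) : PolyHom (p.comp yPoly) p where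
  onPos x := x.1
  onDir _ d := ⟨d, PUnit.unit⟩

/-- The associator `(p ◁ q) ◁ r → p ◁ (q ◁ r)`. -/
def compAssocHom (p q r : PFunctor.{u, u}) :
    PolyHom ((p.comp q).comp r) (p.comp (q.comp r)) where
  onPos x := ⟨x.1.1, fun b => ⟨x.1.2 b, fun c => x.2 ⟨b, c⟩⟩⟩
  onDir x d := ⟨⟨d.1, d.2.1⟩, d.2.2⟩

/-- Finite paths from the root of a `q`-behavior tree (an element of the M-type `q.M`)
to one of its subtrees: the directions of the cofree comonad. -/
inductive MPath (p : PFunctor.{u, u}) : p.M → Type u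
  | nil (t : p.M) : MPath p t
  | cons (a : p.A) (f : p.B a → p.M) (b : p.B a) :
      MPath p (f b) → MPath p (PFunctor.M.mk ⟨a, f⟩)

/-- The cofree comonad `c_q` on `q`, as a polynomial functor: positions are
`q`-behavior trees (the final coalgebra `q.M`), directions are finite paths. -/
def cofreePoly (q : PFunctor.{u, u}) : PFunctor.{u, u} := ⟨q.M, MPath q⟩

/-- The subtree of a behavior tree at the end of a finite path. -/
def subtreeAt {q : PFunctor.{u, u}} : ∀ {t : q.M}, MPath q t → q.M
  | _, .nil t => t
  | _, .cons _ _ _ pth => subtreeAt pth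

/-- Concatenation of paths. -/
def appendPath {q : PFunctor.{u, u}} :
    ∀ {t : q.M} (pth : MPath q t), MPath q (subtreeAt pth) → MPath q t
  | _, .nil _, s => s
  | _, .cons a f b pth, s => .cons a f b (appendPath pth s)

/-- The counit `ε : c_q → y` of the cofree comonad: the projection to `q^((0)) = y`,
sending the unique direction of `y` to the empty path. -/
def cofreeEps (q : PFunctor.{u, u}) : PolyHom (cofreePoly q) yPoly where
  onPos _ := PUnit.unit
  onDir t _ := .nil t

/-- The comultiplication `δ : c_q → c_q ◁ c_q` of the cofree comonad: a behavior tree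
is sent to itself together with all of its subtrees, and a pair of paths is sent to
their concatenation. -/
def cofreeDelta (q : PFunctor.{u, u}) :
    PolyHom (cofreePoly q) ((cofreePoly q).comp (cofreePoly q)) where
  onPos t := ⟨t, fun pth => subtreeAt pth⟩
  onDir t d := appendPath d.1 d.2

/-!
Counitality says that the empty path is a two-sided unit for concatenation of paths, and
coassociativity is associativity of concatenation. The only subtlety is that the subtree at
the end of a concatenation `appendPath b c` agrees with the subtree at the end of `c` only
propositionally, so the direction sets of the two sides of coassociativity are equal but not
definitionally so, and their direction maps are compared heterogeneously.
-/

universe w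

theorem PolyHom.ext_heq {p q : PFunctor.{u, u}} {f g : PolyHom p q}
    (hPos : f.onPos = g.onPos) (hDir : ∀ a, HEq (f.onDir a) (g.onDir a)) : f = g := by
  cases f; cases g
  cases hPos
  congr 1
  exact funext fun a => eq_of_heq (hDir a)

theorem hfunext_sigma_sigma {α δ : Type*} {β : α → Type*} {γ γ' : ∀ a, β a → Type w}
    (hγ : ∀ a b, γ a b = γ' a b)
    {f : (Σ a, Σ b, γ a b) → δ} {g : (Σ a, Σ b, γ' a b) → δ}
    (h : ∀ a b (c : γ a b) (c' : γ' a b), HEq c c' → f ⟨a, b, c⟩ = g ⟨a, b, c'⟩) :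
    HEq f g := by
  obtain rfl : γ = γ' := funext fun a => funext (hγ a)
  exact heq_of_eq (funext fun ⟨a, b, c⟩ => h a b c c HEq.rfl)

section MPath

variable {q : PFunctor.{u, u}}

theorem appendPath_nil : ∀ {t : q.M} (b : MPath q t), appendPath b (.nil (subtreeAt b)) = b
  | _, .nil _ => rfl
  | _, .cons a f d b => congrArg (MPath.cons a f d) (appendPath_nil b)

theorem subtreeAt_appendPath :
    ∀ {t : q.M} (b : MPath q t) (c : MPath q (subtreeAt b)),
      subtreeAt (appendPath b c) = subtreeAt c
  | _, .nil _, _ => rfl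
  | _, .cons _ _ _ b, c => subtreeAt_appendPath b c

theorem appendPath_assoc :
    ∀ {t : q.M} (b : MPath q t) (c : MPath q (subtreeAt b))
      (e : MPath q (subtreeAt (appendPath b c))) (e' : MPath q (subtreeAt c)),
      HEq e e' → appendPath (appendPath b c) e = appendPath b (appendPath c e')
  | _, .nil _, _, _, _, h => by cases h; rfl
  | _, .cons a f d b, c, e, e', h =>
      congrArg (MPath.cons a f d) (appendPath_assoc b c e e' h)

end MPath

section CofreeComonoid

variable (p : PFunctor.{u, u})

theorem cofreeDelta_counit_left :
    composePoly (cofreeDelta p)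
        (composePoly (compHom (cofreeEps p) (idHom (cofreePoly p))) (lunitHom (cofreePoly p))) =
      idHom (cofreePoly p) :=
  rfl

theorem cofreeDelta_counit_right :
    composePoly (cofreeDelta p)
        (composePoly (compHom (idHom (cofreePoly p)) (cofreeEps p)) (runitHom (cofreePoly p))) =
      idHom (cofreePoly p) :=
  PolyHom.ext_heq rfl fun _ => heq_of_eq (funext appendPath_nil)

theorem cofreeDelta_coassoc :
    composePoly (composePoly (cofreeDelta p) (compHom (cofreeDelta p) (idHom (cofreePoly p))))
        (compAssocHom (cofreePoly p) (cofreePoly p) (cofreePoly p)) =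
      composePoly (cofreeDelta p) (compHom (idHom (cofreePoly p)) (cofreeDelta p)) :=
  PolyHom.ext_heq
    (funext fun t => congrArg (Sigma.mk t)
      (funext fun b => congrArg (Sigma.mk (subtreeAt b)) (funext (subtreeAt_appendPath b))))
    fun _ => hfunext_sigma_sigma
      (fun b c => congrArg (MPath p) (subtreeAt_appendPath b c)) appendPath_assoc

end CofreeComonoid

/-- For any polynomial functor `p`, the cofree comonad `c_p` (the
limit of the chain `p^((0)) = y`, `p^((1+i)) = y × (p ◁ p^((i)))`, concretely: behavior
trees and finite paths), equipped with the counit `ε : c_p → y` (the projection) and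
the comultiplication `δ : c_p → c_p ◁ c_p`, is a `◁`-comonoid: counitality and
coassociativity hold. -/
theorem cofreePoly_comonoid (p : PFunctor.{u, u}) :
    composePoly (cofreeDelta p)
        (composePoly (compHom (cofreeEps p) (idHom (cofreePoly p))) (lunitHom (cofreePoly p))) =
      idHom (cofreePoly p) ∧
    composePoly (cofreeDelta p)
        (composePoly (compHom (idHom (cofreePoly p)) (cofreeEps p)) (runitHom (cofreePoly p))) =
      idHom (cofreePoly p) ∧
    composePoly (composePoly (cofreeDelta p) (compHom (cofreeDelta p) (idHom (cofreePoly p))))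
        (compAssocHom (cofreePoly p) (cofreePoly p) (cofreePoly p)) =
      composePoly (cofreeDelta p) (compHom (idHom (cofreePoly p)) (cofreeDelta p)) :=
  ⟨cofreeDelta_counit_left p, cofreeDelta_counit_right p, cofreeDelta_coassoc p⟩
end

section
/- The cofree comonad functor c_− : Poly → Comon(Poly, ◁, y) is right adjoint to the forgetful functor U from ◁-comonoids to Poly: for every ◁-comonoid c and polynomial q, there is a natural bijection between comonoid maps c → c_q and polynomial maps U(c) → q. -/
universe u

/-- A `◁`-comonoid structure on a polynomial `c` (equivalently, a category). -/
structure ComonStr (c : PFunctor.{u, u}) : Type u where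
  ε : PolyHom c yPoly
  δ : PolyHom c (c.comp c)
  left_counit :
    composePoly δ (composePoly (compHom ε (idHom c)) (lunitHom c)) = idHom c
  right_counit :
    composePoly δ (composePoly (compHom (idHom c) ε) (runitHom c)) = idHom c
  coassoc :
    composePoly (composePoly δ (compHom δ (idHom c))) (compAssocHom c c c) =
      composePoly δ (compHom (idHom c) δ)

/-- A map of `◁`-comonoids (a cofunctor). -/
def IsPolyComonoidHom {c d : PFunctor.{u, u}} (mc : ComonStr c) (md : ComonStr d)
    (g : PolyHom c d) : Prop :=
  composePoly g md.ε = mc.ε ∧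
    composePoly g md.δ = composePoly mc.δ (compHom g g)

/-- The counit of the cofree-comonad adjunction: the projection `c_q → q` reading off
the root of a behavior tree. -/
def cofreeCounit (q : PFunctor.{u, u}) : PolyHom (cofreePoly q) q where
  onPos t := (PFunctor.M.dest t).1
  onDir t b :=
    cast (congrArg (MPath q) (PFunctor.M.mk_dest t))
      (MPath.cons (PFunctor.M.dest t).1 (PFunctor.M.dest t).2 b
        (MPath.nil ((PFunctor.M.dest t).2 b)))

/-! Read a `◁`-comonoid `c` as a category: objects `c.A`, morphisms `c.B a` out of `a`, with
codomain and composition given by `δ` and identities by `ε`. A comonoid map `g : c → c_q` sends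
each object to a `q`-behavior tree and each path in that tree to a morphism, the empty path to
the identity and concatenation to composition. Its composite with the counit records the root
labels and the one-step paths; from these the trees are recovered by coinduction and the images
of all paths by induction, since every path is a concatenation of one-step paths. Conversely a
polynomial map `φ : c → q` labels the tree of `a` by `φ` and continues at the codomains of the
morphisms `φ.onDir a d`, and a path is sent to the composite of the morphisms along it. -/

open PFunctor

theorem Sigma.mk_heq_mk_iff {α : Type u} {β γ : α → Type u} (h : β = γ) {a a' : α}
    {x : β a} {y : γ a'} : HEq (⟨a, x⟩ : Sigma β) (⟨a', y⟩ : Sigma γ) ↔ a = a' ∧ HEq x y := by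
  subst h
  rw [heq_iff_eq, Sigma.mk.inj_iff]

theorem Sigma.snd_apply_eq {α γ : Type u} {β : α → Type u} {x y : Σ a, β a → γ} (h : x = y)
    {b : β x.1} {b' : β y.1} (hb : HEq b b') : x.2 b = y.2 b' := by
  subst h
  rw [eq_of_heq hb]

namespace PolyHom

variable {p r : PFunctor.{u, u}}

theorem ext_heq_s16 {φ ψ : PolyHom p r} (hpos : ∀ a, φ.onPos a = ψ.onPos a)
    (hdir : ∀ a d d', HEq d d' → φ.onDir a d = ψ.onDir a d') : φ = ψ := by
  obtain ⟨P, D⟩ := φ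
  obtain ⟨P', D'⟩ := ψ
  obtain rfl : P = P' := funext hpos
  obtain rfl : D = D' := funext fun a => funext fun d => hdir a d d HEq.rfl
  rfl

theorem onDir_congr_heq {φ ψ : PolyHom p r} (h : φ = ψ) (a : p.A) {d : r.B (φ.onPos a)}
    {d' : r.B (ψ.onPos a)} (hd : HEq d d') : φ.onDir a d = ψ.onDir a d' := by
  subst h
  rw [eq_of_heq hd]

theorem yPoly_ext_iff {φ ψ : PolyHom p yPoly} :
    φ = ψ ↔ ∀ a, φ.onDir a PUnit.unit = ψ.onDir a PUnit.unit :=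
  ⟨fun h a => onDir_congr_heq h a HEq.rfl,
    fun h => ext_heq_s16 (fun _ => rfl) fun a _ _ _ => h a⟩

end PolyHom

/-- The comultiplication of a comonoid whose underlying category has objects `c.A` and
morphisms `c.B a` out of `a`: `cod a f` is the codomain of `f` and `comp a ⟨f, g⟩` is the
composite of `f` followed by `g`. -/
def catDelta {c : PFunctor.{u, u}} (cod : ∀ a, c.B a → c.A)
    (comp : ∀ a, (Σ f : c.B a, c.B (cod a f)) → c.B a) : PolyHom c (c.comp c) :=
  ⟨fun a => ⟨a, cod a⟩, comp⟩

theorem composePoly_catDelta_eq_iff {c d : PFunctor.{u, u}} {cod : ∀ a, c.B a → c.A}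
    {comp : ∀ a, (Σ f : c.B a, c.B (cod a f)) → c.B a} {cod' : ∀ a, d.B a → d.A}
    {comp' : ∀ a, (Σ f : d.B a, d.B (cod' a f)) → d.B a} (g : PolyHom c d) :
    composePoly g (catDelta cod' comp') = composePoly (catDelta cod comp) (compHom g g) ↔
      ∃ hcod : ∀ a f, cod' (g.onPos a) f = g.onPos (cod a (g.onDir a f)),
        ∀ a f k, g.onDir a (comp' (g.onPos a) ⟨f, k⟩) =
          comp a ⟨g.onDir a f, g.onDir _ (cast (congrArg d.B (hcod a f)) k)⟩ := by
  constructor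
  · intro h
    have hcod : ∀ a f, cod' (g.onPos a) f = g.onPos (cod a (g.onDir a f)) :=
      fun a => congrFun (eq_of_heq (Sigma.mk.inj (congrArg (·.onPos a) h)).2)
    refine ⟨hcod, fun a f k => PolyHom.onDir_congr_heq h a (d := ⟨f, k⟩) (d' := ⟨f, cast _ k⟩) ?_⟩
    exact (Sigma.mk_heq_mk_iff (funext fun f => congrArg d.B (hcod a f))).2
      ⟨rfl, (cast_heq _ k).symm⟩
  · rintro ⟨hcod, hcomp⟩
    refine PolyHom.ext_heq_s16 (fun a => Sigma.ext rfl (heq_of_eq (funext (hcod a)))) ?_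
    rintro a ⟨f, k⟩ ⟨f', k'⟩ hk
    obtain ⟨rfl, hk⟩ := (Sigma.mk_heq_mk_iff (funext fun f => congrArg d.B (hcod a f))).1 hk
    exact (hcomp a f k).trans (congrArg (fun k => comp a ⟨g.onDir a f, g.onDir _ k⟩)
      (eq_of_heq ((cast_heq _ k).trans hk)))

namespace ComonStr

variable {c : PFunctor.{u, u}} (mc : ComonStr c)

theorem exists_delta_eq_catDelta : ∃ cod comp, mc.δ = catDelta cod comp := by
  have hfst : ∀ a, (mc.δ.onPos a).1 = a := fun a => congrArg (·.onPos a) mc.right_counit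
  generalize mc.δ = δ at hfst ⊢
  obtain ⟨P, D⟩ := δ
  obtain ⟨cod, rfl⟩ : ∃ cod : ∀ a, c.B a → c.A, P = fun a => ⟨a, cod a⟩ :=
    ⟨fun a => hfst a ▸ (P a).2, funext fun a => Sigma.ext (hfst a) (by simp)⟩
  exact ⟨cod, D, rfl⟩

noncomputable def cod : ∀ a, c.B a → c.A := mc.exists_delta_eq_catDelta.choose

noncomputable def comp : ∀ a, (Σ f : c.B a, c.B (mc.cod a f)) → c.B a :=
  mc.exists_delta_eq_catDelta.choose_spec.choose

theorem delta_eq : mc.δ = catDelta mc.cod mc.comp :=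
  mc.exists_delta_eq_catDelta.choose_spec.choose_spec

def idn (a : c.A) : c.B a := mc.ε.onDir a PUnit.unit

theorem comp_idn (a : c.A) (f : c.B a) : mc.comp a ⟨f, mc.idn (mc.cod a f)⟩ = f := by
  have h := mc.right_counit
  rw [delta_eq] at h
  exact PolyHom.onDir_congr_heq h a HEq.rfl

theorem cod_idn (a : c.A) : mc.cod a (mc.idn a) = a := by
  have h := mc.left_counit
  rw [delta_eq] at h
  exact congrArg (·.onPos a) h

theorem idn_comp (a : c.A) (g : c.B (mc.cod a (mc.idn a))) :
    HEq (mc.comp a ⟨mc.idn a, g⟩) g := by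
  have h := mc.left_counit
  rw [delta_eq] at h
  have e := PolyHom.onDir_congr_heq h a (d := g) (d' := cast (congrArg c.B (mc.cod_idn a)) g)
    (cast_heq _ g).symm
  exact heq_of_eq_of_heq e (cast_heq _ g)

theorem cod_comp (a : c.A) (f : c.B a) (g : c.B (mc.cod a f)) :
    mc.cod a (mc.comp a ⟨f, g⟩) = mc.cod (mc.cod a f) g := by
  have h := congrArg (·.onPos a) mc.coassoc
  rw [delta_eq] at h
  have hf := congrFun (eq_of_heq (Sigma.mk.inj h).2) f
  exact congrFun (eq_of_heq (Sigma.mk.inj hf).2) g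

theorem comp_assoc (a : c.A) (f : c.B a) (g : c.B (mc.cod a f))
    (k : c.B (mc.cod a (mc.comp a ⟨f, g⟩))) (k' : c.B (mc.cod (mc.cod a f) g))
    (hk : HEq k k') :
    mc.comp a ⟨mc.comp a ⟨f, g⟩, k⟩ = mc.comp a ⟨f, mc.comp _ ⟨g, k'⟩⟩ := by
  have hfam : ∀ f, (fun g : c.B (mc.cod a f) => c.B (mc.cod a (mc.comp a ⟨f, g⟩))) =
      fun g => c.B (mc.cod (mc.cod a f) g) :=
    fun f => funext fun g => congrArg c.B (mc.cod_comp a f g)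
  have h := mc.coassoc
  rw [delta_eq] at h
  exact PolyHom.onDir_congr_heq h a (d := ⟨f, g, k⟩) (d' := ⟨f, g, k'⟩)
    ((Sigma.mk_heq_mk_iff (funext fun f => congrArg Sigma (hfam f))).2
      ⟨rfl, (Sigma.mk_heq_mk_iff (hfam f)).2 ⟨rfl, hk⟩⟩)

end ComonStr

section Paths

variable {q : PFunctor.{u, u}}

theorem subtreeAt_congr_heq {t t' : q.M} (ht : t = t') {p : MPath q t} {p' : MPath q t'}
    (hp : HEq p p') : subtreeAt p = subtreeAt p' := by
  subst ht
  rw [eq_of_heq hp]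

theorem cofreeCounit_onDir_heq {t : q.M} {a : q.A} {f : q.B a → q.M} (ht : t = M.mk ⟨a, f⟩)
    {d : q.B (M.dest t).1} {d' : q.B a} (hd : HEq d d') :
    HEq ((cofreeCounit q).onDir t d) (MPath.cons a f d' (.nil (f d'))) := by
  subst ht
  obtain rfl : d = d' := eq_of_heq hd
  exact cast_heq (congrArg (MPath q) (M.mk_dest (M.mk ⟨a, f⟩))) (MPath.cons a f d (.nil (f d)))

theorem subtreeAt_cofreeCounit_onDir (t : q.M) (d : q.B (M.dest t).1) :
    subtreeAt ((cofreeCounit q).onDir t d) = (M.dest t).2 d :=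
  subtreeAt_congr_heq (M.mk_dest t).symm (cast_heq _ _)

theorem exists_eq_appendPath_cofreeCounit_onDir {t : q.M} {a : q.A}
    {f : q.B a → q.M} {d : q.B a} {p : MPath q t} {p' : MPath q (f d)} (ht : t = M.mk ⟨a, f⟩)
    (hp : HEq p (MPath.cons a f d p')) :
    ∃ (e : q.B (M.dest t).1) (p₂ : MPath q (subtreeAt ((cofreeCounit q).onDir t e))),
      HEq e d ∧ HEq p₂ p' ∧ p = appendPath ((cofreeCounit q).onDir t e) p₂ := by
  subst ht
  obtain rfl := eq_of_heq hp
  exact ⟨d, p', HEq.rfl, HEq.rfl, rfl⟩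

theorem eq_nil_of_heq_nil {s t : q.M} {p : MPath q s} (hs : s = t)
    (hp : HEq p (MPath.nil t)) : p = .nil s := by
  subst hs
  exact eq_of_heq hp

theorem composePoly_cofreeDelta_eq_iff {c : PFunctor.{u, u}} (mc : ComonStr c)
    (g : PolyHom c (cofreePoly q)) :
    composePoly g (cofreeDelta q) = composePoly mc.δ (compHom g g) ↔
      ∃ hsub : ∀ a (p : MPath q (g.onPos a)), subtreeAt p = g.onPos (mc.cod a (g.onDir a p)),
        ∀ a p₁ p₂, g.onDir a (appendPath p₁ p₂) =
          mc.comp a ⟨g.onDir a p₁, g.onDir _ (cast (congrArg (MPath q) (hsub a p₁)) p₂)⟩ := by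
  rw [mc.delta_eq]
  exact composePoly_catDelta_eq_iff g

end Paths

section BehaviorTree

variable {c q : PFunctor.{u, u}} (mc : ComonStr c) (φ : PolyHom c q)

noncomputable def behaviorTree : c.A → q.M :=
  M.corec fun a => ⟨φ.onPos a, fun d => mc.cod a (φ.onDir a d)⟩

theorem dest_behaviorTree (a : c.A) :
    M.dest (behaviorTree mc φ a) =
      ⟨φ.onPos a, fun d => behaviorTree mc φ (mc.cod a (φ.onDir a d))⟩ :=
  M.dest_corec _ a

theorem behaviorTree_eq_mk_iff {a : c.A} {x : q (q.M)} :
    behaviorTree mc φ a = M.mk x ↔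
      x = ⟨φ.onPos a, fun d => behaviorTree mc φ (mc.cod a (φ.onDir a d))⟩ := by
  rw [← dest_behaviorTree, ← M.mk_dest (behaviorTree mc φ a)]
  exact ⟨fun h => (M.mk_inj h).symm, fun h => congrArg M.mk h.symm⟩

noncomputable def pathToMor : ∀ {t : q.M}, MPath q t → ∀ a, behaviorTree mc φ a = t → c.B a
  | _, .nil _, a, _ => mc.idn a
  | _, .cons a₀ f₀ d p, a, h =>
    have hx : (⟨a₀, f₀⟩ : q q.M) =
        ⟨φ.onPos a, fun d => behaviorTree mc φ (mc.cod a (φ.onDir a d))⟩ :=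
      (behaviorTree_eq_mk_iff mc φ).1 h
    have e : q.B a₀ = q.B (φ.onPos a) := congrArg (fun x => q.B x.1) hx
    mc.comp a ⟨φ.onDir a (cast e d),
      pathToMor p _ (Sigma.snd_apply_eq hx (cast_heq e d).symm).symm⟩

theorem pathToMor_congr_heq {t t' : q.M} {p : MPath q t} {p' : MPath q t'} {a a' : c.A}
    (ht : t = t') (hp : HEq p p') (ha : a = a') (h : behaviorTree mc φ a = t)
    (h' : behaviorTree mc φ a' = t') :
    HEq (pathToMor mc φ p a h) (pathToMor mc φ p' a' h') := by
  subst ht ha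
  obtain rfl := eq_of_heq hp
  rfl

theorem subtreeAt_eq_behaviorTree : ∀ {t : q.M} (p : MPath q t) (a : c.A)
    (h : behaviorTree mc φ a = t),
    subtreeAt p = behaviorTree mc φ (mc.cod a (pathToMor mc φ p a h))
  | _, .nil _, a, h => by
    rw [pathToMor, mc.cod_idn, h]
    rfl
  | _, .cons _ _ _ p, a, h => by
    rw [pathToMor, mc.cod_comp]
    exact subtreeAt_eq_behaviorTree p _ _

theorem pathToMor_appendPath : ∀ {t : q.M} (p₁ : MPath q t) (p₂ : MPath q (subtreeAt p₁))
    (a : c.A) (h : behaviorTree mc φ a = t),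
    pathToMor mc φ (appendPath p₁ p₂) a h =
      mc.comp a ⟨pathToMor mc φ p₁ a h,
        pathToMor mc φ p₂ _ (subtreeAt_eq_behaviorTree mc φ p₁ a h).symm⟩
  | _, .nil _, p₂, a, h => by
    refine eq_of_heq (HEq.symm ?_)
    exact (mc.idn_comp a _).trans (pathToMor_congr_heq mc φ rfl HEq.rfl (mc.cod_idn a) _ _)
  | _, .cons _ _ _ p, p₂, a, h => by
    rw [appendPath, pathToMor, pathToMor_appendPath p p₂]
    refine (mc.comp_assoc _ _ _ _ _ ?_).symm
    exact pathToMor_congr_heq mc φ rfl HEq.rfl (mc.cod_comp _ _ _) _ _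

noncomputable def behaviorTreeHom : PolyHom c (cofreePoly q) :=
  ⟨behaviorTree mc φ, fun a p => pathToMor mc φ p a rfl⟩

theorem composePoly_behaviorTreeHom_cofreeEps :
    composePoly (behaviorTreeHom mc φ) (cofreeEps q) = mc.ε :=
  PolyHom.yPoly_ext_iff.2 fun _ => rfl

theorem composePoly_behaviorTreeHom_cofreeDelta :
    composePoly (behaviorTreeHom mc φ) (cofreeDelta q) =
      composePoly mc.δ (compHom (behaviorTreeHom mc φ) (behaviorTreeHom mc φ)) := by
  refine (composePoly_cofreeDelta_eq_iff mc _).2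
    ⟨fun a p => subtreeAt_eq_behaviorTree mc φ p a rfl, fun a p₁ p₂ => ?_⟩
  refine (pathToMor_appendPath mc φ p₁ p₂ a rfl).trans (congrArg (mc.comp a) ?_)
  exact Sigma.ext rfl (pathToMor_congr_heq mc φ (subtreeAt_eq_behaviorTree mc φ p₁ a rfl)
    (cast_heq _ p₂).symm rfl _ _)

theorem composePoly_behaviorTreeHom_cofreeCounit :
    composePoly (behaviorTreeHom mc φ) (cofreeCounit q) = φ := by
  refine PolyHom.ext_heq_s16 (fun a => congrArg Sigma.fst (dest_behaviorTree mc φ a)) ?_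
  intro a d d' hd
  have hmk := (M.mk_dest (behaviorTree mc φ a)).symm
  refine (eq_of_heq (pathToMor_congr_heq mc φ hmk (cofreeCounit_onDir_heq hmk HEq.rfl) rfl _
    hmk)).trans ?_
  refine (mc.comp_idn a _).trans (congrArg (φ.onDir a) (eq_of_heq ?_))
  exact (cast_heq _ d).trans hd

theorem isPolyComonoidHom_behaviorTreeHom {mq : ComonStr (cofreePoly q)}
    (hε : mq.ε = cofreeEps q) (hδ : mq.δ = cofreeDelta q) :
    IsPolyComonoidHom mc mq (behaviorTreeHom mc φ) := by
  rw [IsPolyComonoidHom, hε, hδ]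
  exact ⟨composePoly_behaviorTreeHom_cofreeEps mc φ, composePoly_behaviorTreeHom_cofreeDelta mc φ⟩

end BehaviorTree

/-- The comonoid-map conditions on `g : c → c_q`, read on paths. -/
structure IsCofreeHom {c q : PFunctor.{u, u}} (mc : ComonStr c) (g : PolyHom c (cofreePoly q)) :
    Prop where
  onDir_nil : ∀ a, g.onDir a (.nil _) = mc.idn a
  subtreeAt_eq : ∀ a (p : MPath q (g.onPos a)), subtreeAt p = g.onPos (mc.cod a (g.onDir a p))
  onDir_appendPath : ∀ a p₁ p₂, g.onDir a (appendPath p₁ p₂) =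
    mc.comp a ⟨g.onDir a p₁, g.onDir _ (cast (congrArg (MPath q) (subtreeAt_eq a p₁)) p₂)⟩

namespace IsCofreeHom

variable {c q : PFunctor.{u, u}} {mc : ComonStr c} {g g' : PolyHom c (cofreePoly q)}

theorem of_isPolyComonoidHom {mq : ComonStr (cofreePoly q)} (hε : mq.ε = cofreeEps q)
    (hδ : mq.δ = cofreeDelta q) (hg : IsPolyComonoidHom mc mq g) : IsCofreeHom mc g := by
  obtain ⟨hgε, hgδ⟩ := hg
  rw [hε] at hgε
  rw [hδ, composePoly_cofreeDelta_eq_iff] at hgδ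
  obtain ⟨hsub, happ⟩ := hgδ
  exact ⟨PolyHom.yPoly_ext_iff.1 hgε, hsub, happ⟩

theorem onPos_eq (hg : IsCofreeHom mc g) :
    g.onPos = behaviorTree mc (composePoly g (cofreeCounit q)) :=
  M.corec_unique _ _ fun a => Sigma.ext rfl <| heq_of_eq <| funext fun d =>
    (subtreeAt_cofreeCounit_onDir _ d).symm.trans (hg.subtreeAt_eq a _)

theorem onDir_heq (hg : IsCofreeHom mc g) (hg' : IsCofreeHom mc g')
    (hφ : composePoly g (cofreeCounit q) = composePoly g' (cofreeCounit q)) :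
    ∀ {t : q.M} (r : MPath q t) {a a' : c.A} (p : MPath q (g.onPos a))
      (p' : MPath q (g'.onPos a')), a = a' → g.onPos a = t → g'.onPos a' = t →
      HEq p r → HEq p' r → HEq (g.onDir a p) (g'.onDir a' p')
  | _, .nil _, a, _, p, p', rfl, ht, ht', hp, hp' => by
    rw [eq_nil_of_heq_nil ht hp, eq_nil_of_heq_nil ht' hp', hg.onDir_nil, hg'.onDir_nil]
  | _, .cons _ f d r, a, _, p, p', rfl, ht, ht', hp, hp' => by
    obtain ⟨e, p₂, he, hp₂, rfl⟩ := exists_eq_appendPath_cofreeCounit_onDir ht hp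
    obtain ⟨e', p₂', he', hp₂', rfl⟩ := exists_eq_appendPath_cofreeCounit_onDir ht' hp'
    have hhead : g.onDir a ((cofreeCounit q).onDir _ e) =
        g'.onDir a ((cofreeCounit q).onDir _ e') :=
      PolyHom.onDir_congr_heq hφ a (he.trans he'.symm)
    have hchild : ∀ {k : PolyHom c (cofreePoly q)} (hk : IsCofreeHom mc k)
        (hkt : k.onPos a = M.mk ⟨_, f⟩) {e₀ : q.B (M.dest (k.onPos a)).1}, HEq e₀ d →
        k.onPos (mc.cod a (k.onDir a ((cofreeCounit q).onDir _ e₀))) = f d :=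
      fun hk hkt e₀ he₀ => (hk.subtreeAt_eq a _).symm.trans <|
        (subtreeAt_cofreeCounit_onDir _ e₀).trans (Sigma.snd_apply_eq (congrArg M.dest hkt) he₀)
    refine heq_of_eq <| (hg.onDir_appendPath a _ _).trans <| Eq.trans ?_
      (hg'.onDir_appendPath a _ _).symm
    refine congrArg (mc.comp a) (Sigma.ext hhead ?_)
    exact onDir_heq hg hg' hφ r _ _ (congrArg (mc.cod a) hhead) (hchild hg ht he)
      (hchild hg' ht' he') ((cast_heq _ _).trans hp₂) ((cast_heq _ _).trans hp₂')

theorem eq_of_counit_eq (hg : IsCofreeHom mc g) (hg' : IsCofreeHom mc g')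
    (hφ : composePoly g (cofreeCounit q) = composePoly g' (cofreeCounit q)) : g = g' := by
  have hpos : g.onPos = g'.onPos := by rw [hg.onPos_eq, hg'.onPos_eq, hφ]
  refine PolyHom.ext_heq_s16 (congrFun hpos) fun a p p' hp => eq_of_heq ?_
  exact hg.onDir_heq hg' hφ p p p' rfl rfl (congrFun hpos a).symm HEq.rfl hp.symm

end IsCofreeHom

/-- The cofree comonad functor is right adjoint to the forgetful
functor from `◁`-comonoids to `Poly`: for every `◁`-comonoid `c` and polynomial `q`,
postcomposition with the counit `c_q → q` is a bijection between comonoid maps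
`c → c_q` and polynomial maps `U(c) → q`.  (Here the comonoid structure on `c_q` has
counit `cofreeEps` and comultiplication `cofreeDelta`.) -/
theorem cofreeComonad_adjunction (c q : PFunctor.{u, u}) (mc : ComonStr c)
    (mq : ComonStr (cofreePoly q)) (hε : mq.ε = cofreeEps q) (hδ : mq.δ = cofreeDelta q) :
    Function.Bijective
      (fun g : { g : PolyHom c (cofreePoly q) // IsPolyComonoidHom mc mq g } =>
        composePoly g.1 (cofreeCounit q)) := by
  constructor
  · rintro ⟨g, hg⟩ ⟨g', hg'⟩ hφ
    exact Subtype.ext <| (IsCofreeHom.of_isPolyComonoidHom hε hδ hg).eq_of_counit_eq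
      (IsCofreeHom.of_isPolyComonoidHom hε hδ hg') hφ
  · intro φ
    exact ⟨⟨behaviorTreeHom mc φ, isPolyComonoidHom_behaviorTreeHom mc φ hε hδ⟩,
      composePoly_behaviorTreeHom_cofreeCounit mc φ⟩
end

section
/- The cofree comonad functor c_− is lax monoidal with respect to the Dirichlet tensor product ⊗ on Poly: there are natural maps y → c_y and c_p ⊗ c_q → c_{p⊗q}, satisfying the unitality and associativity axioms of a lax monoidal functor. -/
universe u

/-- The Dirichlet tensor product `p ⊗ q`: positions multiply and directions multiply. -/
def tensorPoly (p q : PFunctor.{u, u}) : PFunctor.{u, u} :=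
  ⟨p.A × q.A, fun x => p.B x.1 × q.B x.2⟩

/-- The action of `⊗` on morphisms. -/
def tensorHom {p p' q q' : PFunctor.{u, u}} (φ : PolyHom p p') (ψ : PolyHom q q') :
    PolyHom (tensorPoly p q) (tensorPoly p' q') where
  onPos x := (φ.onPos x.1, ψ.onPos x.2)
  onDir x d := (φ.onDir x.1 d.1, ψ.onDir x.2 d.2)

/-- The left unitor `y ⊗ p → p` for `⊗`. -/
def tLunitHom (p : PFunctor.{u, u}) : PolyHom (tensorPoly yPoly p) p :=
  ⟨fun x => x.2, fun _ d => (PUnit.unit, d)⟩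

/-- The right unitor `p ⊗ y → p` for `⊗`. -/
def tRunitHom (p : PFunctor.{u, u}) : PolyHom (tensorPoly p yPoly) p :=
  ⟨fun x => x.1, fun _ d => (d, PUnit.unit)⟩

/-- The inverse right unitor `p → p ⊗ y` for `⊗`. -/
def tRunitInvHom (p : PFunctor.{u, u}) : PolyHom p (tensorPoly p yPoly) :=
  ⟨fun a => (a, PUnit.unit), fun _ d => d.1⟩

/-- The associator `(p ⊗ q) ⊗ r → p ⊗ (q ⊗ r)` for `⊗`. -/
def tAssocHom (p q r : PFunctor.{u, u}) :
    PolyHom (tensorPoly (tensorPoly p q) r) (tensorPoly p (tensorPoly q r)) :=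
  ⟨fun x => (x.1.1, (x.1.2, x.2)), fun _ d => ((d.1, d.2.1), d.2.2)⟩

/-- The inverse associator `p ⊗ (q ⊗ r) → (p ⊗ q) ⊗ r` for `⊗`. -/
def tAssocInvHom (p q r : PFunctor.{u, u}) :
    PolyHom (tensorPoly p (tensorPoly q r)) (tensorPoly (tensorPoly p q) r) :=
  ⟨fun x => ((x.1, x.2.1), x.2.2), fun _ d => (d.1.1, (d.1.2, d.2))⟩

/-!
A position of `c_p` is a `p`-behaviour tree and a direction is a finite path in it. The
functor `c_-` relabels a tree along `f : p → q` by corecursion and pulls paths back along the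
relabelling; the lax structure zips a `p`-tree and a `q`-tree into a `(p ⊗ q)`-tree and splits a
path of the zip into its two shadows, and `y → c_y` picks the unique `y`-tree. Equalities of
trees follow from uniqueness of corecursion. A path is determined by its list of steps, so the
direction components of every law become identities of step lists; along an isomorphism such as
a unitor or the associator, pulling back is just relabelling each step.
-/

open PFunctor

theorem PolyHom.ext_heq_s17 {p q : PFunctor.{u, u}} {φ ψ : PolyHom p q}
    (hPos : ∀ a, φ.onPos a = ψ.onPos a)
    (hDir : ∀ a (d : q.B (φ.onPos a)) (d' : q.B (ψ.onPos a)), d ≍ d' →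
      φ.onDir a d = ψ.onDir a d') :
    φ = ψ := by
  obtain ⟨P, D⟩ := φ
  obtain rfl : P = ψ.onPos := funext hPos
  obtain rfl : D = ψ.onDir := funext fun a => funext fun d => hDir a d d .rfl
  rfl

theorem PFunctor.Obj.snd_cast {P : PFunctor.{u, u}} {X : Type u} {x y : P.Obj X} (h : x = y)
    (b : P.B y.1) : x.2 (cast (congrArg (P.B ∘ Sigma.fst) h).symm b) = y.2 b := by
  subst h; rfl

theorem PFunctor.M.dest_eq_of_eq_mk {P : PFunctor.{u, u}} {t : P.M} {x : P.Obj P.M}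
    (h : t = M.mk x) : M.dest t = x := by
  rw [h, M.dest_mk]

theorem PFunctor.M.eq_of_dest_eq_map {P : PFunctor.{u, u}} {α : Type u} (g : α → P α)
    {f₁ f₂ : α → P.M} (h₁ : ∀ x, M.dest (f₁ x) = P.map f₁ (g x))
    (h₂ : ∀ x, M.dest (f₂ x) = P.map f₂ (g x)) : f₁ = f₂ :=
  (M.corec_unique g f₁ h₁).trans (M.corec_unique g f₂ h₂).symm

namespace MPath

variable {p : PFunctor.{u, u}}

def steps : ∀ {t : p.M}, MPath p t → List (Σ a : p.A, p.B a)
  | _, .nil _ => []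
  | _, .cons a _ b pth => ⟨a, b⟩ :: steps pth

theorem isPath_steps : ∀ {t : p.M} (d : MPath p t), M.IsPath d.steps t
  | _, .nil t => .nil t
  | _, .cons _ f b pth => .cons _ _ f b rfl (isPath_steps pth)

theorem steps_congr {t t' : p.M} (h : t = t') {d : MPath p t} {d' : MPath p t'} (hd : d ≍ d') :
    d.steps = d'.steps := by
  subst h; cases hd; rfl

theorem heq_of_steps_eq {t : p.M} (d : MPath p t) {t' : p.M} (d' : MPath p t') (h : t = t')
    (hs : d.steps = d'.steps) : d ≍ d' := by
  induction d generalizing t' with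
  | nil t =>
    cases d' with
    | nil => subst h; rfl
    | cons => simp [steps] at hs
  | cons a f b pth ih =>
    cases d' with
    | nil => simp [steps] at hs
    | cons a' f' b' pth' =>
      obtain ⟨rfl, hf⟩ := Sigma.mk.inj (M.mk_inj h)
      obtain rfl := eq_of_heq hf
      obtain ⟨hb, hs⟩ := List.cons.inj hs
      obtain rfl : b = b' := eq_of_heq (Sigma.mk.inj hb).2
      obtain rfl := eq_of_heq (ih pth' rfl hs)
      rfl

theorem ext_steps {t : p.M} {d d' : MPath p t} (h : d.steps = d'.steps) : d = d' :=
  eq_of_heq (heq_of_steps_eq d d' rfl h)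

def consDest (t : p.M) (b : p.B (M.dest t).1) (pth : MPath p ((M.dest t).2 b)) : MPath p t :=
  cast (congrArg (MPath p) (M.mk_dest t)) (.cons (M.dest t).1 (M.dest t).2 b pth)

theorem steps_consDest (t : p.M) (b : p.B (M.dest t).1) (pth : MPath p ((M.dest t).2 b)) :
    (consDest t b pth).steps = ⟨(M.dest t).1, b⟩ :: pth.steps :=
  steps_congr (M.mk_dest t).symm (cast_heq _ _)

end MPath

theorem PolyHom.ext_cofreePoly {e r : PFunctor.{u, u}} {φ ψ : PolyHom e (cofreePoly r)}
    (hPos : ∀ a, φ.onPos a = ψ.onPos a)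
    (hDir : ∀ a (d : MPath r (φ.onPos a)) (d' : MPath r (ψ.onPos a)), d.steps = d'.steps →
      φ.onDir a d = ψ.onDir a d') : φ = ψ :=
  PolyHom.ext_heq_s17 hPos fun a _ _ hd => hDir a _ _ (MPath.steps_congr (hPos a) hd)

variable {p q r p' q' : PFunctor.{u, u}}

def treeMap (f : PolyHom p q) : p.M → q.M :=
  M.corec fun t => ⟨f.onPos (M.dest t).1, fun b => (M.dest t).2 (f.onDir _ b)⟩

theorem dest_treeMap (f : PolyHom p q) (t : p.M) :
    M.dest (treeMap f t) =
      ⟨f.onPos (M.dest t).1, fun b => treeMap f ((M.dest t).2 (f.onDir _ b))⟩ :=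
  M.dest_corec _ _

theorem treeMap_id : treeMap (idHom p) = id :=
  (M.corec_unique _ id fun _ => rfl).symm

theorem treeMap_comp (f : PolyHom p q) (g : PolyHom q r) :
    treeMap (composePoly f g) = treeMap g ∘ treeMap f :=
  (M.corec_unique _ _ fun t => by simp only [Function.comp, dest_treeMap]; rfl).symm

def treeZip (s : p.M) (t : q.M) : (tensorPoly p q).M :=
  M.corec (fun x : p.M × q.M =>
      ⟨((M.dest x.1).1, (M.dest x.2).1), fun b => ((M.dest x.1).2 b.1, (M.dest x.2).2 b.2)⟩)
    (s, t)

theorem dest_treeZip (s : p.M) (t : q.M) :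
    M.dest (treeZip s t) =
      ⟨((M.dest s).1, (M.dest t).1), fun b => treeZip ((M.dest s).2 b.1) ((M.dest t).2 b.2)⟩ :=
  M.dest_corec _ _

theorem treeMap_tensorHom_treeZip (f : PolyHom p p') (g : PolyHom q q') (s : p.M) (t : q.M) :
    treeMap (tensorHom f g) (treeZip s t) = treeZip (treeMap f s) (treeMap g t) :=
  congrFun (M.eq_of_dest_eq_map (P := tensorPoly p' q')
    (fun x : p.M × q.M => ⟨(f.onPos (M.dest x.1).1, g.onPos (M.dest x.2).1),
      fun b => ((M.dest x.1).2 (f.onDir _ b.1), (M.dest x.2).2 (g.onDir _ b.2))⟩)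
    (f₁ := fun x => treeMap (tensorHom f g) (treeZip x.1 x.2))
    (f₂ := fun x => treeZip (treeMap f x.1) (treeMap g x.2))
    (fun _ => by simp only [dest_treeMap]; rfl) (fun _ => by simp only [dest_treeZip]; rfl))
    (s, t)

theorem treeMap_tLunitHom_treeZip (w : yPoly.{u}.M) (t : p.M) :
    treeMap (tLunitHom p) (treeZip w t) = t :=
  congrFun (M.eq_of_dest_eq_map (P := p)
    (fun x : yPoly.{u}.M × p.M =>
      ⟨(M.dest x.2).1, fun b => ((M.dest x.1).2 PUnit.unit, (M.dest x.2).2 b)⟩)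
    (f₁ := fun x => treeMap (tLunitHom p) (treeZip x.1 x.2)) (f₂ := Prod.snd)
    (fun _ => by simp only [dest_treeMap]; rfl) (fun _ => rfl)) (w, t)

theorem treeMap_tRunitHom_treeZip (t : p.M) (w : yPoly.{u}.M) :
    treeMap (tRunitHom p) (treeZip t w) = t :=
  congrFun (M.eq_of_dest_eq_map (P := p)
    (fun x : p.M × yPoly.{u}.M =>
      ⟨(M.dest x.1).1, fun b => ((M.dest x.1).2 b, (M.dest x.2).2 PUnit.unit)⟩)
    (f₁ := fun x => treeMap (tRunitHom p) (treeZip x.1 x.2)) (f₂ := Prod.fst)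
    (fun _ => by simp only [dest_treeMap]; rfl) (fun _ => rfl)) (t, w)

theorem treeMap_tAssocHom_treeZip (s : p.M) (t : q.M) (w : r.M) :
    treeMap (tAssocHom p q r) (treeZip (treeZip s t) w) = treeZip s (treeZip t w) :=
  congrFun (M.eq_of_dest_eq_map (P := tensorPoly p (tensorPoly q r))
    (fun x : p.M × q.M × r.M => ⟨((M.dest x.1).1, (M.dest x.2.1).1, (M.dest x.2.2).1),
      fun b => ((M.dest x.1).2 b.1, (M.dest x.2.1).2 b.2.1, (M.dest x.2.2).2 b.2.2)⟩)
    (f₁ := fun x => treeMap (tAssocHom p q r) (treeZip (treeZip x.1 x.2.1) x.2.2))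
    (f₂ := fun x => treeZip x.1 (treeZip x.2.1 x.2.2))
    (fun _ => by simp only [dest_treeMap]; rfl) (fun _ => by simp only [dest_treeZip]; rfl))
    (s, t, w)

def yTree : yPoly.{u}.M :=
  M.corec (fun x : PUnit.{u + 1} => ⟨PUnit.unit, fun _ => x⟩) PUnit.unit

def liftPath (f : PolyHom p q) :
    ∀ {s : q.M}, MPath q s → ∀ t : p.M, treeMap f t = s → MPath p t
  | _, .nil _, t, _ => .nil t
  | _, .cons _ _ b pth, t, h =>
    have hdest := (dest_treeMap f t).symm.trans (M.dest_eq_of_eq_mk h)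
    .consDest t (f.onDir _ (cast (congrArg (q.B ∘ Sigma.fst) hdest).symm b))
      (liftPath f pth _ (Obj.snd_cast hdest b))

/-- The `else` branch is never taken on the steps of a path of `treeMap f t` from `M.dest t`. -/
noncomputable def liftSteps (f : PolyHom p q) :
    p.Obj p.M → List (Σ a : q.A, q.B a) → List (Σ a : p.A, p.B a)
  | _, [] => []
  | x, ⟨a, b⟩ :: l =>
    open Classical in
    if h : f.onPos x.1 = a then
      ⟨x.1, f.onDir _ (cast (congrArg q.B h).symm b)⟩ ::
        liftSteps f (M.dest (x.2 (f.onDir _ (cast (congrArg q.B h).symm b)))) l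
    else []

theorem liftSteps_cons (f : PolyHom p q) (x : p.Obj p.M) (b : q.B (f.onPos x.1))
    (l : List (Σ a : q.A, q.B a)) :
    liftSteps f x (⟨f.onPos x.1, b⟩ :: l) =
      ⟨x.1, f.onDir _ b⟩ :: liftSteps f (M.dest (x.2 (f.onDir _ b))) l := by
  rw [liftSteps, dif_pos rfl]
  rfl

theorem liftSteps_cons_of_ne (f : PolyHom p q) {x : p.Obj p.M} {a : q.A} (h : f.onPos x.1 ≠ a)
    (b : q.B a) (l : List (Σ a : q.A, q.B a)) : liftSteps f x (⟨a, b⟩ :: l) = [] :=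
  dif_neg h

theorem steps_liftPath (f : PolyHom p q) {s : q.M} (d : MPath q s) (t : p.M)
    (h : treeMap f t = s) : (liftPath f d t h).steps = liftSteps f (M.dest t) d.steps := by
  induction d generalizing t with
  | nil => rfl
  | cons a g b pth ih =>
    have hdest := (dest_treeMap f t).symm.trans (M.dest_eq_of_eq_mk h)
    rw [liftPath, MPath.steps_consDest, ih, MPath.steps, liftSteps,
      dif_pos (congrArg Sigma.fst hdest)]

theorem liftSteps_comp (f : PolyHom p q) (g : PolyHom q r) (t : p.M)
    (l : List (Σ a : r.A, r.B a)) :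
    liftSteps (composePoly f g) (M.dest t) l =
      liftSteps f (M.dest t) (liftSteps g (M.dest (treeMap f t)) l) := by
  induction l generalizing t with
  | nil => rfl
  | cons x l ih =>
    obtain ⟨a, b⟩ := x
    rw [dest_treeMap]
    by_cases h : g.onPos (f.onPos (M.dest t).1) = a
    · subst h
      erw [liftSteps_cons (composePoly f g), liftSteps_cons g, liftSteps_cons f, ih, dest_treeMap]
      rfl
    · erw [liftSteps_cons_of_ne (composePoly f g) h, liftSteps_cons_of_ne g h]
      rfl

theorem liftSteps_eq_map (f : PolyHom p q) (σ : (Σ a : q.A, q.B a) → (Σ a : p.A, p.B a))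
    (hσ : ∀ a b, σ ⟨f.onPos a, b⟩ = ⟨a, f.onDir a b⟩) {s : q.M}
    {l : List (Σ a : q.A, q.B a)} (hl : M.IsPath l s) (t : p.M) (h : treeMap f t = s) :
    liftSteps f (M.dest t) l = l.map σ := by
  induction hl generalizing t with
  | nil => rfl
  | cons l s g b hs _ ih =>
    subst h
    obtain ⟨rfl, hg⟩ := Sigma.mk.inj ((dest_treeMap f t).symm.trans (M.dest_eq_of_eq_mk hs))
    refine (liftSteps_cons f _ b l).trans ?_
    erw [List.map_cons, hσ, ih _ (congrFun (eq_of_heq hg) b)]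

def splitPath : ∀ {w : (tensorPoly p q).M}, MPath (tensorPoly p q) w →
    ∀ (s : p.M) (t : q.M), treeZip s t = w → MPath p s × MPath q t
  | _, .nil _, s, t, _ => (.nil s, .nil t)
  | _, .cons _ _ b pth, s, t, h =>
    have hdest := (dest_treeZip s t).symm.trans (M.dest_eq_of_eq_mk h)
    let b' := cast (congrArg ((tensorPoly p q).B ∘ Sigma.fst) hdest).symm b
    let rest := splitPath pth _ _ (Obj.snd_cast hdest b)
    (.consDest s b'.1 rest.1, .consDest t b'.2 rest.2)

def tensorPoly.fstStep (x : Σ a : (tensorPoly p q).A, (tensorPoly p q).B a) : Σ a : p.A, p.B a :=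
  ⟨x.1.1, x.2.1⟩

def tensorPoly.sndStep (x : Σ a : (tensorPoly p q).A, (tensorPoly p q).B a) : Σ a : q.A, q.B a :=
  ⟨x.1.2, x.2.2⟩

theorem steps_splitPath {w : (tensorPoly p q).M} (d : MPath (tensorPoly p q) w) (s : p.M)
    (t : q.M) (h : treeZip s t = w) :
    (splitPath d s t h).1.steps = d.steps.map tensorPoly.fstStep ∧
      (splitPath d s t h).2.steps = d.steps.map tensorPoly.sndStep := by
  induction d generalizing s t with
  | nil => exact ⟨rfl, rfl⟩
  | cons a g b pth ih =>
    obtain rfl : ((M.dest s).1, (M.dest t).1) = a :=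
      congrArg Sigma.fst ((dest_treeZip s t).symm.trans (M.dest_eq_of_eq_mk h))
    simp only [splitPath, MPath.steps_consDest, MPath.steps, ih, cast_eq]
    exact ⟨rfl, rfl⟩

theorem liftSteps_tensorHom (f : PolyHom p p') (g : PolyHom q q') {w : (tensorPoly p' q').M}
    {l : List (Σ a : (tensorPoly p' q').A, (tensorPoly p' q').B a)} (hl : M.IsPath l w)
    (s : p.M) (t : q.M) (h : treeMap (tensorHom f g) (treeZip s t) = w) :
    (liftSteps (tensorHom f g) (M.dest (treeZip s t)) l).map tensorPoly.fstStep =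
        liftSteps f (M.dest s) (l.map tensorPoly.fstStep) ∧
      (liftSteps (tensorHom f g) (M.dest (treeZip s t)) l).map tensorPoly.sndStep =
        liftSteps g (M.dest t) (l.map tensorPoly.sndStep) := by
  induction hl generalizing s t with
  | nil => exact ⟨rfl, rfl⟩
  | cons l w k b hw _ ih =>
    subst h
    have hdest := (dest_treeMap _ _).symm.trans (M.dest_eq_of_eq_mk hw)
    rw [dest_treeZip] at hdest ⊢
    obtain ⟨rfl, hk⟩ := Sigma.mk.inj hdest
    have htail := ih _ _ (congrFun (eq_of_heq hk) b)
    rw [dest_treeZip] at htail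
    erw [liftSteps_cons (tensorHom f g), List.map_cons, List.map_cons, List.map_cons,
      liftSteps_cons f, liftSteps_cons g, htail.1, htail.2]
    exact ⟨rfl, rfl⟩

def cofreeMap (f : PolyHom p q) : PolyHom (cofreePoly p) (cofreePoly q) where
  onPos := treeMap f
  onDir t d := liftPath f d t rfl

def cofreeTensor (p q : PFunctor.{u, u}) :
    PolyHom (tensorPoly (cofreePoly p) (cofreePoly q)) (cofreePoly (tensorPoly p q)) where
  onPos x := treeZip x.1 x.2
  onDir x d := splitPath d x.1 x.2 rfl

def cofreeUnit : PolyHom yPoly (cofreePoly yPoly.{u}) := ⟨fun _ => yTree, fun _ _ => PUnit.unit⟩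

theorem cofreeMap_id : cofreeMap (idHom p) = idHom (cofreePoly p) := by
  refine PolyHom.ext_cofreePoly (congrFun treeMap_id) fun (t : p.M) d d' hs => MPath.ext_steps ?_
  dsimp only [cofreeMap, idHom] at d d' hs ⊢
  rw [steps_liftPath, liftSteps_eq_map _ id (fun _ _ => rfl) d.isPath_steps t rfl, List.map_id, hs]

theorem cofreeMap_comp (f : PolyHom p q) (g : PolyHom q r) :
    cofreeMap (composePoly f g) = composePoly (cofreeMap f) (cofreeMap g) := by
  refine PolyHom.ext_cofreePoly (congrFun (treeMap_comp f g)) fun (t : p.M) d d' hs => ?_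
  refine MPath.ext_steps ?_
  dsimp only [cofreeMap, composePoly] at d d' hs ⊢
  rw [steps_liftPath, steps_liftPath, steps_liftPath, hs]
  exact liftSteps_comp f g t _

theorem cofreeCounit_natural (f : PolyHom p q) :
    composePoly (cofreeMap f) (cofreeCounit q) = composePoly (cofreeCounit p) f := by
  have hroot (t : p.M) : (M.dest (treeMap f t)).1 = f.onPos (M.dest t).1 := by rw [dest_treeMap]
  refine PolyHom.ext_heq_s17 hroot fun (t : p.M) (d : q.B (M.dest (treeMap f t)).1)
    (d' : q.B (f.onPos (M.dest t).1)) hd => MPath.ext_steps ?_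
  change (liftPath f (MPath.consDest (treeMap f t) d (.nil _)) t rfl).steps =
    (MPath.consDest t (f.onDir _ d') (.nil _)).steps
  have hstep : (⟨_, d⟩ : (Σ a : q.A, q.B a)) = ⟨_, d'⟩ := Sigma.ext (hroot t) hd
  rw [steps_liftPath, MPath.steps_consDest, MPath.steps_consDest, MPath.steps, hstep,
    liftSteps_cons]
  rfl

theorem cofreeTensor_natural (f : PolyHom p p') (g : PolyHom q q') :
    composePoly (tensorHom (cofreeMap f) (cofreeMap g)) (cofreeTensor p' q') =
      composePoly (cofreeTensor p q) (cofreeMap (tensorHom f g)) := by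
  refine PolyHom.ext_cofreePoly (fun x => (treeMap_tensorHom_treeZip f g x.1 x.2).symm)
    fun (x : p.M × q.M) d d' hs => ?_
  obtain ⟨s, t⟩ := x
  dsimp only [cofreeMap, cofreeTensor, composePoly, tensorHom] at d d' hs ⊢
  have hlift := liftSteps_tensorHom f g d'.isPath_steps s t rfl
  dsimp only [tensorHom] at hlift
  refine Prod.ext (MPath.ext_steps ?_) (MPath.ext_steps ?_) <;>
    simp only [steps_liftPath, steps_splitPath, hs, hlift]

theorem cofreeTensor_left_unitality (p : PFunctor.{u, u}) :
    composePoly (tensorHom cofreeUnit (idHom (cofreePoly p)))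
        (composePoly (cofreeTensor yPoly p) (cofreeMap (tLunitHom p))) =
      tLunitHom (cofreePoly p) := by
  refine PolyHom.ext_cofreePoly (fun x => treeMap_tLunitHom_treeZip yTree x.2)
    fun (x : PUnit × p.M) d d' hs => ?_
  obtain ⟨_, t⟩ := x
  dsimp only [cofreeMap, cofreeTensor, cofreeUnit, composePoly, tensorHom, tLunitHom, idHom]
    at d d' hs ⊢
  refine Prod.ext rfl (MPath.ext_steps ?_)
  simp only [steps_splitPath, steps_liftPath,
    liftSteps_eq_map _ (fun i => ⟨(PUnit.unit, i.1), (PUnit.unit, i.2)⟩) (fun _ _ => rfl)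
      d.isPath_steps _ rfl, ← hs, List.map_map]
  exact List.map_id _

theorem cofreeTensor_right_unitality (p : PFunctor.{u, u}) :
    composePoly (tensorHom (idHom (cofreePoly p)) cofreeUnit)
        (composePoly (cofreeTensor p yPoly) (cofreeMap (tRunitHom p))) =
      tRunitHom (cofreePoly p) := by
  refine PolyHom.ext_cofreePoly (fun x => treeMap_tRunitHom_treeZip x.1 yTree)
    fun (x : p.M × PUnit) d d' hs => ?_
  obtain ⟨t, _⟩ := x
  dsimp only [cofreeMap, cofreeTensor, cofreeUnit, composePoly, tensorHom, tRunitHom, idHom]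
    at d d' hs ⊢
  refine Prod.ext (MPath.ext_steps ?_) rfl
  simp only [steps_splitPath, steps_liftPath,
    liftSteps_eq_map _ (fun i => ⟨(i.1, PUnit.unit), (i.2, PUnit.unit)⟩) (fun _ _ => rfl)
      d.isPath_steps _ rfl, ← hs, List.map_map]
  exact List.map_id _

theorem cofreeTensor_associativity (p q r : PFunctor.{u, u}) :
    composePoly (tensorHom (cofreeTensor p q) (idHom (cofreePoly r)))
        (composePoly (cofreeTensor (tensorPoly p q) r) (cofreeMap (tAssocHom p q r))) =
      composePoly (tAssocHom (cofreePoly p) (cofreePoly q) (cofreePoly r))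
        (composePoly (tensorHom (idHom (cofreePoly p)) (cofreeTensor q r))
          (cofreeTensor p (tensorPoly q r))) := by
  refine PolyHom.ext_cofreePoly (fun x => treeMap_tAssocHom_treeZip x.1.1 x.1.2 x.2)
    fun (x : (p.M × q.M) × r.M) d d' hs => ?_
  obtain ⟨⟨s, t⟩, w⟩ := x
  dsimp only [cofreeMap, cofreeTensor, composePoly, tensorHom, tAssocHom, idHom] at d d' hs ⊢
  have hlift := liftSteps_eq_map (tAssocHom p q r)
    (fun i => ⟨((i.1.1, i.1.2.1), i.1.2.2), ((i.2.1, i.2.2.1), i.2.2.2)⟩) (fun _ _ => rfl)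
    d.isPath_steps (treeZip (treeZip s t) w) rfl
  dsimp only [tAssocHom] at hlift
  refine Prod.ext (Prod.ext ?_ ?_) ?_ <;> refine MPath.ext_steps ?_ <;>
    simp only [steps_splitPath, steps_liftPath, ← hs, hlift, List.map_map] <;> rfl

/-- The cofree comonad functor `c_-` is lax monoidal with respect to
the Dirichlet tensor `⊗` on `Poly`: there are natural maps `y → c_y` and
`c_p ⊗ c_q → c_{p⊗q}` satisfying the unitality and associativity axioms of a lax
monoidal functor.  (The functorial action of `c_-` on morphisms is characterized by
functoriality together with compatibility with the counits `c_p → p`.) -/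
theorem cofree_laxMonoidal :
    ∃ cmap : ∀ p q : PFunctor.{u, u}, PolyHom p q → PolyHom (cofreePoly p) (cofreePoly q),
      (∀ p, cmap p p (idHom p) = idHom (cofreePoly p)) ∧
      (∀ (p q r : PFunctor.{u, u}) (f : PolyHom p q) (g : PolyHom q r),
        cmap p r (composePoly f g) = composePoly (cmap p q f) (cmap q r g)) ∧
      (∀ (p q : PFunctor.{u, u}) (f : PolyHom p q),
        composePoly (cmap p q f) (cofreeCounit q) = composePoly (cofreeCounit p) f) ∧
      ∃ (u : PolyHom yPoly (cofreePoly yPoly.{u}))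
        (L : ∀ p q : PFunctor.{u, u},
          PolyHom (tensorPoly (cofreePoly p) (cofreePoly q)) (cofreePoly (tensorPoly p q))),
        (∀ (p p' q q' : PFunctor.{u, u}) (f : PolyHom p p') (g : PolyHom q q'),
          composePoly (tensorHom (cmap p p' f) (cmap q q' g)) (L p' q') =
            composePoly (L p q) (cmap _ _ (tensorHom f g))) ∧
        (∀ p : PFunctor.{u, u},
          composePoly (tensorHom u (idHom (cofreePoly p)))
              (composePoly (L yPoly p) (cmap _ _ (tLunitHom p))) =
            tLunitHom (cofreePoly p)) ∧
        (∀ p : PFunctor.{u, u},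
          composePoly (tensorHom (idHom (cofreePoly p)) u)
              (composePoly (L p yPoly) (cmap _ _ (tRunitHom p))) =
            tRunitHom (cofreePoly p)) ∧
        (∀ p q r : PFunctor.{u, u},
          composePoly (tensorHom (L p q) (idHom (cofreePoly r)))
              (composePoly (L (tensorPoly p q) r) (cmap _ _ (tAssocHom p q r))) =
            composePoly (tAssocHom (cofreePoly p) (cofreePoly q) (cofreePoly r))
              (composePoly (tensorHom (idHom (cofreePoly p)) (L q r))
                (L p (tensorPoly q r)))) :=
  ⟨fun _ _ => cofreeMap, fun _ => cofreeMap_id, fun _ _ _ => cofreeMap_comp,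
    fun _ _ => cofreeCounit_natural, cofreeUnit, cofreeTensor,
    fun _ _ _ _ => cofreeTensor_natural, cofreeTensor_left_unitality,
    cofreeTensor_right_unitality, cofreeTensor_associativity⟩
end
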